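/- Suppose (L_n) is a sequence of positive linear operators from the weighted space C_ρ([0,∞)) to B_ρ([0,∞)) with ρ(x) = 1 + x², such that ‖L_n(t^v; ·) − x^v‖_ρ → 0 for v = 0, 1, 2. Then for every f ∈ C_ρ^k([0,∞)) (continuous with f(x)/ρ(x) converging to a finite limit as x → ∞), ‖L_n f − f‖_ρ → 0, where ‖h‖_ρ = sup_{x≥0} |h(x)|/ρ(x). -/

import Mathlib

open Real Filter Set

/-!
Korovkin's argument, with the weight `1 + x²` taking care of the tail. For a bounded, uniformly
continuous `h`, the estimate `|h t - h x| ≤ ε + K (t - x)²` and the positivity of `L n` bound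
`|L n h x - h x|` by `ε` plus the errors of `L n` on `1, t, t²`, which is good enough for `x` in a
compact range; for large `x` the bound `|h| ≤ B` is already small against `1 + x²`. Every `f` with
`f x / (1 + x²) → l` is within `ε (1 + x²)` of such an `h` plus `l (1 + x²)`, and convergence in
the weighted norm survives such approximations because `L n (1 + t²) ≤ 2 (1 + x²)` eventually.
-/

structure IsPositiveLinearOnIci (T : (ℝ → ℝ) → ℝ → ℝ) : Prop extends IsLinearMap ℝ T where
  mono : ∀ f g : ℝ → ℝ, (∀ t, 0 ≤ t → f t ≤ g t) → ∀ x, 0 ≤ x → T f x ≤ T g x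

namespace IsLinearMap

variable {T : (ℝ → ℝ) → ℝ → ℝ}

theorem apply_sub_const (hT : IsLinearMap ℝ T) (f : ℝ → ℝ) (c x : ℝ) :
    T (fun t => f t - c) x = T f x - c * T (fun t => t ^ 0) x := by
  have : (fun t => f t - c) = f - c • fun t : ℝ => t ^ 0 := by
    ext t
    simp
  rw [this, hT.map_sub, hT.map_smul]
  rfl

theorem apply_quadratic (hT : IsLinearMap ℝ T) (c₀ c₁ c₂ x : ℝ) :
    T (fun t => c₀ + c₁ * t + c₂ * t ^ 2) x =
      c₀ * T (fun t => t ^ 0) x + c₁ * T (fun t => t ^ 1) x + c₂ * T (fun t => t ^ 2) x := by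
  have : (fun t => c₀ + c₁ * t + c₂ * t ^ 2) =
      c₀ • (fun t : ℝ => t ^ 0) + c₁ • (fun t : ℝ => t ^ 1) + c₂ • fun t : ℝ => t ^ 2 := by
    ext t
    simp
  rw [this, hT.map_add, hT.map_add, hT.map_smul, hT.map_smul, hT.map_smul]
  rfl

end IsLinearMap

namespace IsPositiveLinearOnIci

variable {T : (ℝ → ℝ) → ℝ → ℝ} {f b : ℝ → ℝ} {a K η x : ℝ}

theorem abs_apply_le (hT : IsPositiveLinearOnIci T) (hfb : ∀ t, 0 ≤ t → |f t| ≤ b t)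
    (hx : 0 ≤ x) : |T f x| ≤ T b x := by
  refine abs_le.2 ⟨?_, hT.mono f b (fun t ht => (le_abs_self _).trans (hfb t ht)) x hx⟩
  have := hT.mono (-f) b (fun t ht => (neg_le_abs _).trans (hfb t ht)) x hx
  rw [hT.map_neg, Pi.neg_apply] at this
  linarith

theorem abs_apply_sub_le (hT : IsPositiveLinearOnIci T) (hx : 0 ≤ x)
    (hf : ∀ t, 0 ≤ t → |f t - f x| ≤ a + K * (t - x) ^ 2) :
    |T f x - f x| ≤ a * T (fun t => t ^ 0) x +
      K * (T (fun t => t ^ 2) x - 2 * x * T (fun t => t ^ 1) x + x ^ 2 * T (fun t => t ^ 0) x) +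
      |f x| * |T (fun t => t ^ 0) x - 1| := by
  have hquad : (fun t => a + K * (t - x) ^ 2) =
      fun t => (a + K * x ^ 2) + (-2 * K * x) * t + K * t ^ 2 := by
    ext t
    ring
  have hmain := hT.abs_apply_le hf hx
  rw [hT.apply_sub_const, hquad, hT.apply_quadratic] at hmain
  calc |T f x - f x|
      = |(T f x - f x * T (fun t => t ^ 0) x) + f x * (T (fun t => t ^ 0) x - 1)| := by
        congr 1
        ring
    _ ≤ |T f x - f x * T (fun t => t ^ 0) x| + |f x| * |T (fun t => t ^ 0) x - 1| := by
      rw [← abs_mul]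
      exact abs_add_le _ _
    _ ≤ _ := by linarith

theorem abs_apply_sub_le_of_abs_sub_pow_le (hT : IsPositiveLinearOnIci T) (hx : 0 ≤ x)
    (ha : 0 ≤ a) (hK : 0 ≤ K)
    (he : ∀ v ≤ 2, |T (fun t => t ^ v) x - x ^ v| ≤ η * (1 + x ^ 2))
    (hf : ∀ t, 0 ≤ t → |f t - f x| ≤ a + K * (t - x) ^ 2) :
    |T f x - f x| ≤ a + (a + K * (1 + x) ^ 2 + |f x|) * (η * (1 + x ^ 2)) := by
  have e₀ := he 0 (by norm_num)
  have e₁ := abs_le.1 (he 1 (by norm_num))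
  have e₂ := abs_le.1 (he 2 le_rfl)
  rw [pow_zero] at e₀
  rw [pow_one] at e₁
  have h₀ : a * T (fun t => t ^ 0) x ≤ a * (1 + η * (1 + x ^ 2)) :=
    mul_le_mul_of_nonneg_left (by linarith [(abs_le.1 e₀).2]) ha
  have hsq : T (fun t => t ^ 2) x - 2 * x * T (fun t => t ^ 1) x + x ^ 2 * T (fun t => t ^ 0) x ≤
      (1 + x) ^ 2 * (η * (1 + x ^ 2)) := by
    nlinarith [(abs_le.1 e₀).2, e₁.1, e₂.2, sq_nonneg x]
  have h₂ := mul_le_mul_of_nonneg_left hsq hK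
  have h₃ := mul_le_mul_of_nonneg_left e₀ (abs_nonneg (f x))
  linarith [hT.abs_apply_sub_le hx hf]

end IsPositiveLinearOnIci

/-- `L n f → f` in the weighted norm `‖h‖_ρ = sup_{x ≥ 0} |h x| / (1 + x²)`, stated without the
supremum, which takes the junk value `0` when `|h x| / (1 + x²)` is unbounded. -/
def TendstoWeighted (L : ℕ → (ℝ → ℝ) → ℝ → ℝ) (f : ℝ → ℝ) : Prop :=
  ∀ ε > 0, ∀ᶠ n in atTop, ∀ x, 0 ≤ x → |L n f x - f x| ≤ ε * (1 + x ^ 2)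

namespace TendstoWeighted

variable {L : ℕ → (ℝ → ℝ) → ℝ → ℝ} {f g : ℝ → ℝ}

theorem tendsto_iSup (h : TendstoWeighted L f) :
    Tendsto (fun n => ⨆ x : {x : ℝ // 0 ≤ x}, |L n f x - f x| / (1 + (x : ℝ) ^ 2))
      atTop (nhds 0) := by
  have : Nonempty {x : ℝ // 0 ≤ x} := ⟨⟨0, le_rfl⟩⟩
  refine tendsto_order.2 ⟨fun a ha => Eventually.of_forall fun n => ha.trans_le
    (Real.iSup_nonneg fun x => by positivity), fun a ha => ?_⟩
  filter_upwards [h (a / 2) (half_pos ha)] with n hn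
  exact (ciSup_le fun x : {x : ℝ // 0 ≤ x} => (div_le_iff₀ (by positivity)).2 (hn x x.2)).trans_lt
    (half_lt_self ha)

theorem add (hL : ∀ n, IsLinearMap ℝ (L n)) (hf : TendstoWeighted L f)
    (hg : TendstoWeighted L g) : TendstoWeighted L (f + g) := by
  intro ε hε
  filter_upwards [hf (ε / 2) (half_pos hε), hg (ε / 2) (half_pos hε)] with n hfn hgn x hx
  rw [(hL n).map_add]
  calc |(L n f + L n g) x - (f + g) x| = |(L n f x - f x) + (L n g x - g x)| := by
        simp only [Pi.add_apply]
        ring_nf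
    _ ≤ ε / 2 * (1 + x ^ 2) + ε / 2 * (1 + x ^ 2) :=
        (abs_add_le _ _).trans (add_le_add (hfn x hx) (hgn x hx))
    _ = ε * (1 + x ^ 2) := by ring

theorem const_smul (hL : ∀ n, IsLinearMap ℝ (L n)) (hf : TendstoWeighted L f) (c : ℝ) :
    TendstoWeighted L (c • f) := by
  intro ε hε
  filter_upwards [hf (ε / (|c| + 1)) (by positivity)] with n hn x hx
  rw [(hL n).map_smul]
  calc |(c • L n f) x - (c • f) x| = |c| * |L n f x - f x| := by
        simp only [Pi.smul_apply, smul_eq_mul, ← abs_mul, mul_sub]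
    _ ≤ (|c| + 1) * (ε / (|c| + 1) * (1 + x ^ 2)) :=
        mul_le_mul (by linarith) (hn x hx) (abs_nonneg _) (by positivity)
    _ = ε * (1 + x ^ 2) := by field_simp

end TendstoWeighted

theorem tendstoWeighted_of_tendsto_iSup {L : ℕ → (ℝ → ℝ) → ℝ → ℝ} {f : ℝ → ℝ}
    (hbdd : ∀ n, ∃ M, ∀ x, 0 ≤ x → |L n f x - f x| ≤ M * (1 + x ^ 2))
    (h : Tendsto (fun n => ⨆ x : {x : ℝ // 0 ≤ x}, |L n f x - f x| / (1 + (x : ℝ) ^ 2))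
      atTop (nhds 0)) :
    TendstoWeighted L f := by
  intro ε hε
  filter_upwards [h.eventually (gt_mem_nhds hε)] with n hn x hx
  obtain ⟨M, hM⟩ := hbdd n
  have hbdd' : BddAbove (range fun y : {y : ℝ // 0 ≤ y} =>
      |L n f y - f y| / (1 + (y : ℝ) ^ 2)) := by
    refine ⟨M, ?_⟩
    rintro _ ⟨y, rfl⟩
    exact (div_le_iff₀ (by positivity)).2 (hM y y.2)
  exact (div_le_iff₀ (by positivity)).1 ((le_ciSup hbdd' ⟨x, hx⟩).trans hn.le)

theorem TendstoWeighted.of_forall_approx {L : ℕ → (ℝ → ℝ) → ℝ → ℝ} {f : ℝ → ℝ}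
    (hL : ∀ n, IsPositiveLinearOnIci (L n)) (hρ : TendstoWeighted L fun t => 1 + t ^ 2)
    (happrox : ∀ ε > 0, ∃ g, TendstoWeighted L g ∧ ∀ t, 0 ≤ t → |f t - g t| ≤ ε * (1 + t ^ 2)) :
    TendstoWeighted L f := by
  intro ε hε
  obtain ⟨g, hg, hfg⟩ := happrox (ε / 4) (by positivity)
  filter_upwards [hρ 1 one_pos, hg (ε / 4) (by positivity)] with n hρn hgn x hx
  have hLρ : L n (fun t => 1 + t ^ 2) x ≤ 2 * (1 + x ^ 2) := by
    linarith [(abs_le.1 (hρn x hx)).2]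
  have hLfg : |L n (f - g) x| ≤ ε / 4 * L n (fun t => 1 + t ^ 2) x := by
    rw [← smul_eq_mul, ← Pi.smul_apply, ← (hL n).map_smul]
    exact (hL n).abs_apply_le hfg hx
  rw [(hL n).map_sub, Pi.sub_apply] at hLfg
  calc |L n f x - f x| = |(L n f x - L n g x) + (L n g x - g x) - (f x - g x)| := by
        congr 1
        ring
    _ ≤ |L n f x - L n g x| + |L n g x - g x| + |f x - g x| :=
        (abs_sub _ _).trans (add_le_add_left (abs_add_le _ _) _)
    _ ≤ ε / 4 * (2 * (1 + x ^ 2)) + ε / 4 * (1 + x ^ 2) + ε / 4 * (1 + x ^ 2) := by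
        gcongr
        · exact hLfg.trans (mul_le_mul_of_nonneg_left hLρ (by positivity))
        · exact hgn x hx
        · exact hfg x hx
    _ = ε * (1 + x ^ 2) := by ring

theorem UniformContinuousOn.exists_abs_sub_le_add_mul_sq {h : ℝ → ℝ} {s : Set ℝ} {B ε : ℝ}
    (huc : UniformContinuousOn h s) (hB : ∀ t ∈ s, |h t| ≤ B) (hε : 0 < ε) :
    ∃ K, 0 ≤ K ∧ ∀ x ∈ s, ∀ t ∈ s, |h t - h x| ≤ ε + K * (t - x) ^ 2 := by
  obtain ⟨δ, hδ, hclose⟩ := Metric.uniformContinuousOn_iff.1 huc ε hε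
  have hK : 0 ≤ 2 * |B| / δ ^ 2 := by positivity
  refine ⟨_, hK, fun x hx t ht => ?_⟩
  rcases lt_or_ge |t - x| δ with hnear | hfar
  · have hclose' := hclose t ht x hx hnear
    rw [Real.dist_eq] at hclose'
    linarith [mul_nonneg hK (sq_nonneg (t - x))]
  · have hsq : δ ^ 2 ≤ (t - x) ^ 2 := by
      rw [← sq_abs (t - x)]
      exact pow_le_pow_left₀ hδ.le hfar 2
    calc |h t - h x| ≤ 2 * |B| :=
          (abs_sub _ _).trans (by linarith [hB t ht, hB x hx, le_abs_self B])
      _ = 2 * |B| / δ ^ 2 * δ ^ 2 := by field_simp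
      _ ≤ 2 * |B| / δ ^ 2 * (t - x) ^ 2 := mul_le_mul_of_nonneg_left hsq hK
      _ ≤ ε + 2 * |B| / δ ^ 2 * (t - x) ^ 2 := le_add_of_nonneg_left hε.le

theorem tendstoWeighted_of_uniformContinuousOn {L : ℕ → (ℝ → ℝ) → ℝ → ℝ} {h : ℝ → ℝ} {B : ℝ}
    (hL : ∀ n, IsPositiveLinearOnIci (L n)) (htest : ∀ v ≤ 2, TendstoWeighted L fun t => t ^ v)
    (huc : UniformContinuousOn h (Ici 0)) (hB : ∀ t, 0 ≤ t → |h t| ≤ B) :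
    TendstoWeighted L h := by
  intro ε hε
  obtain ⟨K, hK, hquad⟩ := huc.exists_abs_sub_le_add_mul_sq hB (half_pos hε)
  have hB₀ : 0 ≤ B := (abs_nonneg _).trans (hB 0 le_rfl)
  set R := 4 * B / ε
  set D := ε / 2 + K * (1 + R) ^ 2 + 3 * B with hD_def
  set η := ε / 2 / D with hη_def
  have hD : 0 < D := by positivity
  have hDη : D * η = ε / 2 := by
    rw [hη_def]
    field_simp
  have htest' := (eventually_all_finite (finite_Iic 2)).2 fun v hv => htest v hv η (by positivity)
  filter_upwards [htest'] with n hn x hx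
  have hbound : ∀ a K', 0 ≤ a → 0 ≤ K' → a ≤ ε / 2 * (1 + x ^ 2) →
      a + K' * (1 + x) ^ 2 + |h x| ≤ D → (∀ t, 0 ≤ t → |h t - h x| ≤ a + K' * (t - x) ^ 2) →
      |L n h x - h x| ≤ ε * (1 + x ^ 2) := by
    intro a K' ha hK' haε hcoeff hquad'
    have hmain := (hL n).abs_apply_sub_le_of_abs_sub_pow_le hx ha hK' (fun v hv => hn v hv x hx)
      hquad'
    have hcoeff' := mul_le_mul_of_nonneg_right hcoeff (by positivity : 0 ≤ η * (1 + x ^ 2))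
    rw [← mul_assoc D, hDη] at hcoeff'
    linarith
  rcases le_total x R with hxR | hRx
  · have hxR' : (1 + x) ^ 2 ≤ (1 + R) ^ 2 := pow_le_pow_left₀ (by linarith) (by linarith) 2
    exact hbound _ _ (half_pos hε).le hK (by nlinarith)
      (by linarith [mul_le_mul_of_nonneg_left hxR' hK, hB x hx]) (hquad x hx)
  · have hfar : 4 * B ≤ ε * x := by rwa [div_le_iff₀' hε] at hRx
    exact hbound (2 * B) 0 (by positivity) le_rfl (by nlinarith [sq_nonneg (x - 1)])
      (by nlinarith [hB x hx]) fun t ht => (abs_sub _ _).trans (by linarith [hB t ht, hB x hx])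

theorem exists_uniformContinuousOn_approx {f : ℝ → ℝ} {l ε : ℝ}
    (hf : ContinuousOn f (Ici 0)) (hl : Tendsto (fun x => f x / (1 + x ^ 2)) atTop (nhds l))
    (hε : 0 < ε) :
    ∃ h B, UniformContinuousOn h (Ici 0) ∧ (∀ t, 0 ≤ t → |h t| ≤ B) ∧
      ∀ t, 0 ≤ t → |f t - (h t + l * (1 + t ^ 2))| ≤ ε * (1 + t ^ 2) := by
  set g := fun t => f t - l * (1 + t ^ 2)
  obtain ⟨a₀, ha₀⟩ :=
    eventually_atTop.1 (hl.eventually (Metric.closedBall_mem_nhds l (half_pos hε)))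
  set a := max a₀ 0
  have hg : ∀ t, a ≤ t → |g t| ≤ ε / 2 * (1 + t ^ 2) := by
    intro t ht
    have hρ : 0 < 1 + t ^ 2 := by positivity
    have hdist := ha₀ t (le_of_max_le_left ht)
    rw [Real.dist_eq] at hdist
    have : g t = (f t / (1 + t ^ 2) - l) * (1 + t ^ 2) := by
      simp only [g]
      field_simp
    rw [this, abs_mul, abs_of_pos hρ]
    exact mul_le_mul_of_nonneg_right hdist hρ.le
  have hgc : ContinuousOn g (Icc 0 a) := (hf.mono Icc_subset_Ici_self).sub (by fun_prop)
  obtain ⟨B, hB⟩ := isCompact_Icc.exists_bound_of_continuousOn hgc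
  have hmaps : MapsTo (fun t => min t a) (Ici 0) (Icc 0 a) :=
    fun t ht => ⟨le_min ht (le_max_right _ _), min_le_right _ _⟩
  refine ⟨fun t => g (min t a), B,
    (isCompact_Icc.uniformContinuousOn_of_continuous hgc).comp
      (LipschitzWith.id.min_const a).uniformContinuous.uniformContinuousOn hmaps,
    fun t ht => hB _ (hmaps ht), fun t ht => ?_⟩
  rcases le_total t a with hta | hat
  · have : f t - (g (min t a) + l * (1 + t ^ 2)) = 0 := by
      simp only [g, min_eq_left hta]
      ring
    rw [this, abs_zero]
    positivity
  · have hρ : 1 + a ^ 2 ≤ 1 + t ^ 2 := by gcongr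
    calc |f t - (g (min t a) + l * (1 + t ^ 2))| = |g t - g a| := by
          rw [min_eq_right hat]
          congr 1
          simp only [g]
          ring
      _ ≤ ε / 2 * (1 + t ^ 2) + ε / 2 * (1 + a ^ 2) :=
          (abs_sub _ _).trans (add_le_add (hg t hat) (hg a le_rfl))
      _ ≤ ε * (1 + t ^ 2) := by nlinarith

/-- Gadjiev's weighted Korovkin theorem on `[0,∞)` with weight `ρ(x) = 1 + x²`:
if a sequence of positive linear operators mapping `C_ρ` to `B_ρ` satisfies
`‖L_n(t^v;·) − x^v‖_ρ → 0` for `v = 0,1,2`, then `‖L_n f − f‖_ρ → 0` for every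
`f ∈ C_ρ^k`. -/
theorem stmt14 (L : ℕ → (ℝ → ℝ) → ℝ → ℝ)
    (hadd : ∀ n (f g : ℝ → ℝ), L n (f + g) = L n f + L n g)
    (hsmul : ∀ n (c : ℝ) (f : ℝ → ℝ), L n (c • f) = c • L n f)
    (hmono : ∀ n (f g : ℝ → ℝ), (∀ t : ℝ, 0 ≤ t → f t ≤ g t) →
      ∀ x : ℝ, 0 ≤ x → L n f x ≤ L n g x)
    (hmaps : ∀ n (f : ℝ → ℝ), ContinuousOn f (Set.Ici 0) →
      (∃ M : ℝ, ∀ x : ℝ, 0 ≤ x → |f x| ≤ M * (1 + x ^ 2)) →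
      ∃ M : ℝ, ∀ x : ℝ, 0 ≤ x → |L n f x| ≤ M * (1 + x ^ 2))
    (hkor : ∀ v : ℕ, v ≤ 2 →
      Tendsto (fun n : ℕ =>
          ⨆ x : {x : ℝ // 0 ≤ x},
            |L n (fun t => t ^ v) x - (x : ℝ) ^ v| / (1 + (x : ℝ) ^ 2))
        atTop (nhds 0)) :
    ∀ f : ℝ → ℝ, ContinuousOn f (Set.Ici 0) →
      (∃ M : ℝ, ∀ x : ℝ, 0 ≤ x → |f x| ≤ M * (1 + x ^ 2)) →
      (∃ l : ℝ, Tendsto (fun x : ℝ => f x / (1 + x ^ 2)) atTop (nhds l)) →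
      Tendsto (fun n : ℕ =>
          ⨆ x : {x : ℝ // 0 ≤ x}, |L n f x - f x| / (1 + (x : ℝ) ^ 2))
        atTop (nhds 0) := by
  intro f hf _ ⟨l, hl⟩
  have hL : ∀ n, IsPositiveLinearOnIci (L n) := fun n => ⟨⟨hadd n, hsmul n⟩, hmono n⟩
  have hlin n := (hL n).toIsLinearMap
  have htest : ∀ v ≤ 2, TendstoWeighted L fun t => t ^ v := by
    intro v hv
    refine tendstoWeighted_of_tendsto_iSup (fun n => ?_) (hkor v hv)
    have hpow : ∀ x : ℝ, 0 ≤ x → |x ^ v| ≤ 1 * (1 + x ^ 2) := fun x hx => by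
      rw [abs_of_nonneg (by positivity), one_mul]
      interval_cases v <;> nlinarith
    obtain ⟨M, hM⟩ := hmaps n _ (continuous_pow v).continuousOn ⟨1, hpow⟩
    exact ⟨M + 1, fun x hx => (abs_sub _ _).trans (by linarith [hM x hx, hpow x hx])⟩
  have hρ : TendstoWeighted L fun t => 1 + t ^ 2 := by
    have hρ_eq : (fun t : ℝ => 1 + t ^ 2) = (fun t => t ^ 0) + fun t => t ^ 2 := by
      ext t
      simp
    rw [hρ_eq]
    exact (htest 0 (by norm_num)).add hlin (htest 2 le_rfl)
  refine (TendstoWeighted.of_forall_approx hL hρ fun ε hε => ?_).tendsto_iSup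
  obtain ⟨h, B, huc, hB, happrox⟩ := exists_uniformContinuousOn_approx hf hl hε
  exact ⟨_, (tendstoWeighted_of_uniformContinuousOn hL htest huc hB).add hlin
    (hρ.const_smul hlin l), happrox⟩
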